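/- Let S be a finite nonempty set of positive integers with k = max S ∈ S, and define G_s : ℕ → ℤ by G_s(0) = 0 and G_s(n) = max_{j ∈ S, j ≤ n} (j - G_s(n - j)) for n > 0 (G_s(n) = 0 if no such j exists). Then for every r with 0 ≤ r ≤ k and every i ∈ ℕ, G_s(r + (2i + 1)k) ≥ k - r. -/

import Mathlib

/-!
Moving `k` beans from `m + k` shows `G (m + k) ≥ k - G m`, so it suffices that
`G (r + 2ik) ≤ r` for `r ≤ k`. This goes by induction on `i`: from `r + 2(i+1)k` a move
`j ≥ r` lands on the odd position `(r + k - j) + 2ik + k`, whose value is at least `j - r`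
by the first remark and the induction hypothesis, and a move `j < r` gains at most `j`
because `G ≥ 0`.
-/

def IsOptimalNetScore (S : Finset ℕ) (G : ℕ → ℤ) : Prop :=
  ∀ n : ℕ, 0 < n →
    G n = if h : (S.filter (fun j => j ≤ n)).Nonempty
      then (S.filter (fun j => j ≤ n)).sup' h (fun j => (j : ℤ) - G (n - j))
      else 0

namespace IsOptimalNetScore

variable {S : Finset ℕ} {G : ℕ → ℤ}

theorem sub_le_add (hG : IsOptimalNetScore S G) {j : ℕ} (hjS : j ∈ S) (hj : 0 < j) (m : ℕ) :
    (j : ℤ) - G m ≤ G (m + j) := by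
  have hmem : j ∈ S.filter (fun j' => j' ≤ m + j) := Finset.mem_filter.mpr ⟨hjS, by omega⟩
  rw [hG (m + j) (by omega), dif_pos ⟨j, hmem⟩]
  simpa using Finset.le_sup' (fun j' : ℕ => (j' : ℤ) - G (m + j - j')) hmem

theorem le_of_forall (hG : IsOptimalNetScore S G) {n : ℕ} (hn : 0 < n) {c : ℤ} (hc : 0 ≤ c)
    (h : ∀ j ∈ S, j ≤ n → (j : ℤ) - G (n - j) ≤ c) : G n ≤ c := by
  rw [hG n hn]
  split_ifs with hne
  · exact Finset.sup'_le _ _ fun j hj => h j (Finset.mem_filter.mp hj).1 (Finset.mem_filter.mp hj).2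
  · exact hc

theorem nonneg_and_le (hpos : ∀ j ∈ S, 0 < j) (h0 : G 0 = 0) (hG : IsOptimalNetScore S G)
    (n : ℕ) : 0 ≤ G n ∧ ∀ m : ℕ, (∀ j ∈ S, j ≤ n → j ≤ m) → G n ≤ m := by
  induction n using Nat.strong_induction_on with
  | _ n ih =>
    rcases Nat.eq_zero_or_pos n with rfl | hn
    · simp [h0]
    have upper : ∀ m : ℕ, (∀ j ∈ S, j ≤ n → j ≤ m) → G n ≤ m := by
      refine fun m hm => hG.le_of_forall hn (Nat.cast_nonneg m) fun j hjS hjn => ?_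
      have hGnn := (ih (n - j) (by have := hpos j hjS; omega)).1
      have hjm : (j : ℤ) ≤ m := by exact_mod_cast hm j hjS hjn
      linarith
    refine ⟨?_, upper⟩
    by_cases hne : (S.filter (fun j => j ≤ n)).Nonempty
    · obtain ⟨hjS, hjn⟩ := Finset.mem_filter.mp (Finset.max'_mem _ hne)
      set j := (S.filter (fun j => j ≤ n)).max' hne
      have hjpos := hpos j hjS
      have hmove : (j : ℤ) - G (n - j) ≤ G n := by
        simpa [Nat.sub_add_cancel hjn] using hG.sub_le_add hjS hjpos (n - j)
      have hrest : G (n - j) ≤ j := (ih (n - j) (by omega)).2 j fun j' hj' hle =>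
        Finset.le_max' _ _ (Finset.mem_filter.mpr ⟨hj', by omega⟩)
      linarith
    · rw [hG n hn, dif_neg hne]

theorem nonneg (hpos : ∀ j ∈ S, 0 < j) (h0 : G 0 = 0) (hG : IsOptimalNetScore S G) (n : ℕ) :
    0 ≤ G n :=
  (hG.nonneg_and_le hpos h0 n).1

theorem le_self (hpos : ∀ j ∈ S, 0 < j) (h0 : G 0 = 0) (hG : IsOptimalNetScore S G) (n : ℕ) :
    G n ≤ n :=
  (hG.nonneg_and_le hpos h0 n).2 n fun _ _ h => h

variable {k : ℕ}

theorem le_add_add_of_forall_sub_le (hpos : ∀ j ∈ S, 0 < j) (h0 : G 0 = 0)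
    (hG : IsOptimalNetScore S G) (hk : ∀ j ∈ S, j ≤ k) (hk0 : 0 < k) {T : ℕ}
    (hT : ∀ r ≤ k, (k : ℤ) - r ≤ G (r + T + k)) (r : ℕ) :
    G (r + T + k + k) ≤ r := by
  refine hG.le_of_forall (by omega) (Nat.cast_nonneg r) fun j hjS _ => ?_
  have hjk := hk j hjS
  rcases le_or_gt r j with hrj | hjr
  · have hodd := hT (r + k - j) (by omega)
    rw [show r + k - j + T + k = r + T + k + k - j by omega, Nat.cast_sub (by omega)] at hodd
    push_cast at hodd
    linarith
  · have hGnn := hG.nonneg hpos h0 (r + T + k + k - j)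
    have : (j : ℤ) < r := by exact_mod_cast hjr
    linarith

theorem le_add_two_mul_mul (hpos : ∀ j ∈ S, 0 < j) (h0 : G 0 = 0) (hG : IsOptimalNetScore S G)
    (hk : ∀ j ∈ S, j ≤ k) (hkS : k ∈ S) (i : ℕ) {r : ℕ} (hr : r ≤ k) :
    G (r + 2 * i * k) ≤ r := by
  induction i generalizing r with
  | zero => simpa using hG.le_self hpos h0 r
  | succ i ih =>
    have hodd : ∀ r ≤ k, (k : ℤ) - r ≤ G (r + 2 * i * k + k) := fun r hr =>
      (sub_le_sub_left (ih hr) _).trans (hG.sub_le_add hkS (hpos k hkS) _)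
    rw [show r + 2 * (i + 1) * k = r + 2 * i * k + k + k by ring]
    exact hG.le_add_add_of_forall_sub_le hpos h0 hk (hpos k hkS) hodd r

end IsOptimalNetScore

theorem stmt_3 (S : Finset ℕ) (hS : S.Nonempty) (hpos : ∀ j ∈ S, 0 < j)
    (k : ℕ) (hk : k = S.max' hS)
    (Gs : ℕ → ℤ) (h0 : Gs 0 = 0)
    (hG : ∀ n : ℕ, 0 < n →
      Gs n = if h : (S.filter (fun j => j ≤ n)).Nonempty
        then (S.filter (fun j => j ≤ n)).sup' h (fun j => (j : ℤ) - Gs (n - j))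
        else 0) (hkS : k ∈ S) :
    ∀ r : ℕ, r ≤ k → ∀ i : ℕ, Gs (r + (2 * i + 1) * k) ≥ (k : ℤ) - (r : ℤ) := by
  intro r hr i
  have hG' : IsOptimalNetScore S Gs := hG
  have hmax : ∀ j ∈ S, j ≤ k := fun j hj => hk ▸ S.le_max' j hj
  have heven := hG'.le_add_two_mul_mul hpos h0 hmax hkS i hr
  rw [show r + (2 * i + 1) * k = r + 2 * i * k + k by ring]
  linarith [hG'.sub_le_add hkS (hpos k hkS) (r + 2 * i * k)]
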